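/- For every x ∈ ℤ/(q²-1) with x ∉ A(q,θ), there are at least q - 1 ordered triples (a,b,c) ∈ A³ with a - b + c = x, a ≠ b, and b ≠ c. -/

import Mathlib

/-!
Let `K = 𝔽_q ⊆ F` be the subfield fixed by `y ↦ y ^ q` and `e a = θ ^ a`, so that
`A = e⁻¹ (θ + K)`. In the `K`-plane `F`, the lines `θ + K` and `w (θ + K)` are parallel exactly
when `w ∈ K`, and then distinct unless `w = 1`. Hence `e (a - b) ∉ K` for distinct `a, b ∈ A`,
while every `d` with `e d ∉ K` is a difference `a - b` of elements of `A` (the two lines meet).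
So at most one `c ∈ A` has `e (x - c) ∈ K`; each of the other `q - 1` elements `c` gives a triple
`(a, b, c)` with `x - c = a - b`, where `a ≠ b` because `x ≠ c` and `b ≠ c` because `x ∉ A`.
-/

/-- The Bose-Chowla set: `a` with `θ^a - θ` in the subfield `F_q`
(characterized as fixed points of the `q`-power Frobenius). -/
def BoseChowla (q : ℕ) {F : Type*} [Field F] (θ : F) : Set (ZMod (q ^ 2 - 1)) :=
  {a | (θ ^ a.val - θ) ^ q = θ ^ a.val - θ}

/-- The Cayley sum graph `G_{q,θ}`: `x ~ y` iff `x ≠ y` and `x + y ∈ A(q,θ)`. -/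
def CayleyGraph (q : ℕ) {F : Type*} [Field F] (θ : F) : SimpleGraph (ZMod (q ^ 2 - 1)) :=
  SimpleGraph.fromRel (fun x y => x + y ∈ BoseChowla q θ)

/-- A graph is `C₄`-free: no four vertices form a 4-cycle. -/
def C4Free {V : Type*} (G : SimpleGraph V) : Prop :=
  ∀ a b c d : V, G.Adj a b → G.Adj b c → G.Adj c d → G.Adj d a → a = c ∨ b = d

open Pointwise

theorem ncard_le_ncard_triples {G : Type*} [AddCommGroup G] [Finite G] {A : Set G} {x : G}
    (hx : x ∉ A) :
    {c ∈ A | x - c ∈ A - A}.ncard ≤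
      {T : G × G × G | T.1 ∈ A ∧ T.2.1 ∈ A ∧ T.2.2 ∈ A ∧
        T.1 - T.2.1 + T.2.2 = x ∧ T.1 ≠ T.2.1 ∧ T.2.1 ≠ T.2.2}.ncard := by
  refine (Set.ncard_le_ncard ?_ (Set.toFinite _)).trans (Set.ncard_image_le (f := fun T => T.2.2))
  rintro c ⟨hc, a, ha, b, hb, hab : a - b = x - c⟩
  refine ⟨(a, b, c), ⟨ha, hb, hc, by simp [hab], fun (hba : a = b) => ?_, fun (hbc : b = c) => ?_⟩,
    rfl⟩
  · rw [hba, sub_self, eq_comm, sub_eq_zero] at hab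
    exact hx (hab ▸ hc)
  · rw [hbc, sub_left_inj] at hab
    exact hx (hab ▸ ha)

section PowVal

variable {M : Type*} [Monoid M] {θ : M} {n : ℕ} [NeZero n]

theorem pow_eq_pow_iff_natCast_eq (hθ : orderOf θ = n) {i j : ℕ} :
    θ ^ i = θ ^ j ↔ (i : ZMod n) = j := by
  have : IsOfFinOrder θ := orderOf_pos_iff.mp (hθ ▸ NeZero.pos n)
  rw [this.pow_eq_pow_iff_modEq, ZMod.natCast_eq_natCast_iff, hθ]

theorem pow_val_add (hθ : orderOf θ = n) (a b : ZMod n) :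
    θ ^ (a + b).val = θ ^ a.val * θ ^ b.val := by
  rw [← pow_add, pow_eq_pow_iff_natCast_eq hθ]
  simp only [Nat.cast_add, ZMod.natCast_zmod_val]

theorem pow_val_injective (hθ : orderOf θ = n) :
    Function.Injective fun a : ZMod n => θ ^ a.val := by
  intro a b h
  simpa only [pow_eq_pow_iff_natCast_eq hθ, ZMod.natCast_zmod_val] using h

end PowVal

theorem exists_pow_val_eq {F : Type*} [Field F] [Fintype F] {θ : F} {n : ℕ} [NeZero n]
    (hθ : orderOf θ = n) (hF : Fintype.card F = n + 1) {y : F} (hy : y ≠ 0) : ∃ a : ZMod n, θ ^ a.val = y := by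
  have hyn : y ^ n = 1 := by
    simpa [hF] using FiniteField.pow_card_sub_one_eq_one y hy
  obtain ⟨i, -, rfl⟩ := (hθ ▸ IsPrimitiveRoot.orderOf θ).eq_pow_of_pow_eq_one hyn
  exact ⟨i, by rw [pow_eq_pow_iff_natCast_eq hθ, ZMod.natCast_zmod_val]⟩

section AffineLine

variable {F : Type*} [Field F] {K : Subfield F} {θ : F}

theorem ne_zero_of_sub_mem (hθ : θ ∉ K) {z : F} (hz : z - θ ∈ K) : z ≠ 0 := by
  rintro rfl
  exact hθ (by simpa using K.neg_mem hz)

theorem notMem_of_eq_mul (hθ : θ ∉ K) {y z w : F} (hy : y - θ ∈ K) (hz : z - θ ∈ K)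
    (hyz : y ≠ z) (h : y = w * z) : w ∉ K := by
  intro hw
  have hw1 : w - 1 ≠ 0 := by
    rintro hw1
    rw [sub_eq_zero.mp hw1, one_mul] at h
    exact hyz h
  have hθ_eq : θ = ((y - θ) - w * (z - θ)) / (w - 1) := by
    rw [eq_div_iff hw1, h]
    ring
  exact hθ (hθ_eq ▸ K.div_mem (K.sub_mem hy (K.mul_mem hw hz)) (K.sub_mem hw K.one_mem))

theorem exists_eq_mul_of_notMem (hspan : ∀ y, ∃ s ∈ K, ∃ t ∈ K, y = s + t * θ) {w : F}
    (hw : w ∉ K) : ∃ y z, y - θ ∈ K ∧ z - θ ∈ K ∧ y = w * z := by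
  obtain ⟨u, hu, v, hv, rfl⟩ := hspan w
  obtain ⟨β, hβ, α, hα, hθθ⟩ := hspan (θ * θ)
  have hv0 : v ≠ 0 := by
    rintro rfl
    exact hw (by simpa using hu)
  -- choose `t` so that the `θ`-coordinate of `w (θ + t)` is `1`
  set t := (1 - u - v * α) / v
  have ht : t ∈ K := K.div_mem (K.sub_mem (K.sub_mem K.one_mem hu) (K.mul_mem hv hα)) hv
  have hvt : v * t = 1 - u - v * α := mul_div_cancel₀ _ hv0
  refine ⟨θ + (u * t + v * β), θ + t, by simpa using K.add_mem (K.mul_mem hu ht) (K.mul_mem hv hβ),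
    by simpa using ht, ?_⟩
  linear_combination (-v) * hθθ - θ * hvt

theorem exists_eq_add_mul_of_card_le [Finite F] (hθ : θ ∉ K)
    (hcard : Nat.card F ≤ Nat.card K ^ 2) : ∀ y, ∃ s ∈ K, ∃ t ∈ K, y = s + t * θ := by
  have hinj : Function.Injective fun st : K × K => (st.1 : F) + st.2 * θ := by
    rintro ⟨s, t⟩ ⟨s', t'⟩ h
    by_cases htt : t = t'
    · subst htt
      simpa using h
    · have ht : (t : F) - t' ≠ 0 := sub_ne_zero.mpr (Subtype.coe_injective.ne htt)
      refine absurd ?_ hθ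
      have : θ = (s' - s) / (t - t') := by
        rw [eq_div_iff ht]
        linear_combination h
      exact this ▸ K.div_mem (K.sub_mem s'.2 s.2) (K.sub_mem t.2 t'.2)
  intro y
  obtain ⟨⟨s, t⟩, rfl⟩ := (hinj.bijective_of_nat_card_le (by rwa [Nat.card_prod, ← sq])).2 y
  exact ⟨s, s.2, t, t.2, rfl⟩

end AffineLine

def boseChowlaOver {F : Type*} [Field F] (K : Subfield F) (θ : F) (n : ℕ) : Set (ZMod n) :=
  {a | θ ^ a.val - θ ∈ K}

namespace boseChowlaOver

variable {F : Type*} [Field F] {K : Subfield F} {θ : F} {n : ℕ} [NeZero n]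

theorem pow_val_sub_notMem (hθ : orderOf θ = n) (hθK : θ ∉ K) {a b : ZMod n}
    (ha : a ∈ boseChowlaOver K θ n) (hb : b ∈ boseChowlaOver K θ n) (hab : a ≠ b) :
    θ ^ (a - b).val ∉ K :=
  notMem_of_eq_mul hθK ha hb ((pow_val_injective hθ).ne hab)
    (by rw [← pow_val_add hθ, sub_add_cancel])

theorem mem_sub_of_pow_val_notMem [Fintype F] (hθ : orderOf θ = n)
    (hF : Fintype.card F = n + 1) (hθK : θ ∉ K) (hspan : ∀ y, ∃ s ∈ K, ∃ t ∈ K, y = s + t * θ)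
    {d : ZMod n} (hd : θ ^ d.val ∉ K) : d ∈ boseChowlaOver K θ n - boseChowlaOver K θ n := by
  obtain ⟨y, z, hy, hz, hyz⟩ := exists_eq_mul_of_notMem hspan hd
  obtain ⟨a, rfl⟩ := exists_pow_val_eq hθ hF (ne_zero_of_sub_mem hθK hy)
  obtain ⟨b, rfl⟩ := exists_pow_val_eq hθ hF (ne_zero_of_sub_mem hθK hz)
  rw [← pow_val_add hθ] at hyz
  exact ⟨a, hy, b, hz, by simp [pow_val_injective hθ hyz]⟩

theorem subsingleton_pow_val_sub_mem (hθ : orderOf θ = n) (hθK : θ ∉ K) (x : ZMod n) :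
    {c ∈ boseChowlaOver K θ n | θ ^ (x - c).val ∈ K}.Subsingleton := by
  rintro c ⟨hc, hxc⟩ c' ⟨hc', hxc'⟩
  by_contra hcc
  have hθ0 : θ ≠ 0 := by
    rintro rfl
    exact hθK K.zero_mem
  have h : θ ^ (c - c').val = θ ^ (x - c').val / θ ^ (x - c).val := by
    rw [eq_div_iff (pow_ne_zero _ hθ0), ← pow_val_add hθ, sub_add_sub_cancel']
  exact pow_val_sub_notMem hθ hθK hc hc' hcc (h ▸ K.div_mem hxc' hxc)

theorem ncard_eq [Fintype F] (hθ : orderOf θ = n) (hF : Fintype.card F = n + 1) (hθK : θ ∉ K) :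
    (boseChowlaOver K θ n).ncard = Nat.card K := by
  have hline : boseChowlaOver K θ n = (fun a : ZMod n => θ ^ a.val) ⁻¹' ((· - θ) ⁻¹' K) := rfl
  rw [hline, Set.ncard_preimage_of_injective_subset_range (pow_val_injective hθ),
    Set.ncard_preimage_of_injective_subset_range sub_left_injective]
  · exact (Nat.card_coe_set_eq (K : Set F)).symm
  · exact fun y _ => ⟨y + θ, add_sub_cancel_right y θ⟩
  · exact fun y hy => exists_pow_val_eq hθ hF (ne_zero_of_sub_mem hθK hy)

theorem ncard_le_ncard_add_one [Fintype F] (hθ : orderOf θ = n) (hF : Fintype.card F = n + 1)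
    (hθK : θ ∉ K) (hspan : ∀ y, ∃ s ∈ K, ∃ t ∈ K, y = s + t * θ) (x : ZMod n) :
    (boseChowlaOver K θ n).ncard ≤
      {c ∈ boseChowlaOver K θ n |
        x - c ∈ boseChowlaOver K θ n - boseChowlaOver K θ n}.ncard + 1 := by
  refine (Set.ncard_le_ncard ?_ (Set.toFinite _)).trans ((Set.ncard_union_le _ _).trans
    (add_le_add_right ((Set.ncard_le_one_iff (Set.toFinite _)).mpr fun hc hc' =>
      subsingleton_pow_val_sub_mem hθ hθK x hc hc') _))
  intro c hc
  by_cases hxc : θ ^ (x - c).val ∈ K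
  · exact Or.inr ⟨hc, hxc⟩
  · exact Or.inl ⟨hc, mem_sub_of_pow_val_notMem hθ hF hθK hspan hxc⟩

end boseChowlaOver

theorem exists_subfield_mem_iff_pow_eq_self {F : Type*} [Field F] [Fintype F] {q m : ℕ}
    (hq : IsPrimePow q) (hF : Fintype.card F = q ^ m) :
    ∃ K : Subfield F, ∀ y, y ∈ K ↔ y ^ q = y := by
  obtain ⟨p, k, hp, -, rfl⟩ := (isPrimePow_nat_iff q).mp hq
  have := Fact.mk hp
  have : CharP F p := charP_of_card_eq_prime_pow (f := k * m) (by rw [hF, pow_mul])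
  exact ⟨(iterateFrobenius F p k).eqLocusField (RingHom.id F), fun y => Iff.rfl⟩

theorem IsPrimitiveRoot.add_one_le_ncard_pow_eq_self {R : Type*} [CommRing R] [IsDomain R]
    [Finite R] {ζ : R} {m : ℕ} (hm : 0 < m) (h : IsPrimitiveRoot ζ m) :
    m + 1 ≤ {y : R | y ^ (m + 1) = y}.ncard := by
  classical
  have hsub : ↑(insert 0 (Polynomial.nthRootsFinset m (1 : R))) ⊆ {y : R | y ^ (m + 1) = y} := by
    intro y hy
    rcases Finset.mem_insert.mp hy with rfl | hy
    · exact zero_pow m.succ_ne_zero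
    · rw [Set.mem_ofPred_eq, pow_succ, (Polynomial.mem_nthRootsFinset hm 1).mp hy, one_mul]
  calc m + 1 = (insert 0 (Polynomial.nthRootsFinset m (1 : R))).card := by
        rw [Finset.card_insert_of_notMem
          (fun h0 => Polynomial.ne_zero_of_mem_nthRootsFinset one_ne_zero h0 rfl),
          h.card_nthRootsFinset]
    _ ≤ _ := by rw [← Set.ncard_coe_finset]; exact Set.ncard_le_ncard hsub

theorem pow_ne_self_of_orderOf_eq {M : Type*} [Monoid M] {θ : M} {q : ℕ} (hq : 2 ≤ q)
    (hθ : orderOf θ = q ^ 2 - 1) : θ ^ q ≠ θ := by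
  have hq4 : q + 2 ≤ q ^ 2 := by nlinarith
  have : NeZero (q ^ 2 - 1) := ⟨by omega⟩
  intro h
  have h1 := (pow_eq_pow_iff_natCast_eq hθ (i := q) (j := 1)).mp (by rwa [pow_one])
  rw [ZMod.natCast_eq_natCast_iff', Nat.mod_eq_of_lt (by omega), Nat.mod_eq_of_lt (by omega)] at h1
  omega

theorem many_triples (q : ℕ) (hq : IsPrimePow q) (F : Type*) [Field F]
    [Fintype F] (hF : Fintype.card F = q ^ 2) (θ : F) (hθ : orderOf θ = q ^ 2 - 1) :
    ∀ x : ZMod (q ^ 2 - 1), x ∉ BoseChowla q θ →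
      q - 1 ≤ {T : ZMod (q ^ 2 - 1) × ZMod (q ^ 2 - 1) × ZMod (q ^ 2 - 1) |
        T.1 ∈ BoseChowla q θ ∧ T.2.1 ∈ BoseChowla q θ ∧ T.2.2 ∈ BoseChowla q θ ∧
        T.1 - T.2.1 + T.2.2 = x ∧ T.1 ≠ T.2.1 ∧ T.2.1 ≠ T.2.2}.ncard := by
  intro x hx
  have hq2 := hq.two_le
  have hq4 : 4 ≤ q ^ 2 := by nlinarith
  have hFn : Fintype.card F = q ^ 2 - 1 + 1 := by omega
  have : NeZero (q ^ 2 - 1) := ⟨by omega⟩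
  obtain ⟨K, hK⟩ := exists_subfield_mem_iff_pow_eq_self hq hF
  have hA : BoseChowla q θ = boseChowlaOver K θ (q ^ 2 - 1) := by ext; exact (hK _).symm
  have hθK : θ ∉ K := by rw [hK]; exact pow_ne_self_of_orderOf_eq hq2 hθ
  have hKq : q ≤ Nat.card K := by
    have hprim : IsPrimitiveRoot (θ ^ (q + 1)) (q - 1) :=
      (hθ ▸ IsPrimitiveRoot.orderOf θ).pow (NeZero.pos _) (by simpa using Nat.sq_sub_sq q 1)
    have := hprim.add_one_le_ncard_pow_eq_self (by omega)
    rwa [Nat.sub_add_cancel (by omega), ← (Set.ext hK : (K : Set F) = _),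
      ← Nat.card_coe_set_eq] at this
  have hspan := exists_eq_add_mul_of_card_le hθK
    (by rw [Nat.card_eq_fintype_card, hF]; exact Nat.pow_le_pow_left hKq 2)
  calc q - 1 ≤ (BoseChowla q θ).ncard - 1 := by
        rw [hA, boseChowlaOver.ncard_eq hθ hFn hθK]; omega
    _ ≤ {c ∈ BoseChowla q θ | x - c ∈ BoseChowla q θ - BoseChowla q θ}.ncard := by
        have := hA ▸ boseChowlaOver.ncard_le_ncard_add_one hθ hFn hθK hspan x
        omega
    _ ≤ _ := ncard_le_ncard_triples hx
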